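/- Let k be an even integer with k ≥ 4 and let d = (3k+4)/2. Then any two symmetric (d,k) circuit codes of length 4k+6 are isomorphic, i.e., there is a unique symmetric (d,k) circuit code of maximum length 4k+6 up to isomorphism of the hypercube I(d). -/

import Mathlib

/-!
Fold the symmetric transition sequence onto its half period:
`τ = σ ∘ (ZMod (4k+6) → ZMod (2k+3))`.
The Hamming distance across a window of the code is the number of coordinates occurring an odd
number of times in that window, so the spread condition becomes a lower bound on these counts
for the windows of `σ`. Short windows show that every coordinate occurs in `σ` at most twice, and
then exactly `k + 1` apart; hence `σ` is determined, up to a permutation of the coordinates, by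
its set of anchors `u` with `σ (u + (k+1)) = σ u`. Counting with `2d = 3k + 4` gives exactly
`(k+2)/2` anchors and makes `σ` surjective, and windows of lengths `k + 3` and `2k + 1` show
that the anchors form an arithmetic progression with difference `2`: sending an anchor `p` to
`p + 2` when that is an anchor and to `p + (k+3)` otherwise permutes the anchors, and the sum of
the displacements vanishes modulo `2k + 3` only if exactly one of them is long. So the anchor
sets of two such codes are translates of each other, which is the claimed isomorphism.
-/

/-- The graph of the `d`-dimensional hypercube: vertices are binary vectors of
length `d`, adjacent iff they differ in exactly one coordinate. -/
def hypercube (d : ℕ) : SimpleGraph (Fin d → Bool) where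
  Adj x y := hammingDist x y = 1
  symm := ⟨fun x y (h : hammingDist x y = 1) => (hammingDist_comm y x).trans h⟩
  loopless := ⟨fun x (h : hammingDist x x = 1) => by simp [hammingDist_self] at h⟩

/-- Distance along a cycle of length `N` between positions `i` and `j`. -/
def cycDist {N : ℕ} (i j : ZMod N) : ℕ := min (i - j).val (j - i).val

/-- `x : ZMod N → (Fin d → Bool)` is a `(d,k)` circuit code of length `N`:
a cycle in the hypercube `I(d)` satisfying the spread-`k` distance requirement. -/
structure IsCircuitCode (d k N : ℕ) (x : ZMod N → Fin d → Bool) : Prop where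
  inj : Function.Injective x
  adj : ∀ i : ZMod N, (hypercube d).Adj (x i) (x (i + 1))
  spread : ∀ i j : ZMod N, min (cycDist i j) k ≤ (hypercube d).dist (x i) (x j)

/-- `τ` is the transition sequence of the cycle `x`: `τ i` is the unique
coordinate in which `x i` and `x (i+1)` differ. -/
def IsTransitionSeq {d N : ℕ} (x : ZMod N → Fin d → Bool) (τ : ZMod N → Fin d) : Prop :=
  ∀ (i : ZMod N) (j : Fin d), x (i + 1) j ≠ x i j ↔ j = τ i

/-- The segment of `τ` of length `m` starting at position `start` is a bit run:
all of its entries are distinct. -/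
def IsBitRun {d N : ℕ} (τ : ZMod N → Fin d) (start : ZMod N) (m : ℕ) : Prop :=
  ∀ a b : Fin m, τ (start + ((a : ℕ) : ZMod N)) = τ (start + ((b : ℕ) : ZMod N)) → a = b

/-- `δ(ω)`: the number of coordinates appearing an odd number of times in the
segment of `τ` of length `m` starting at `start`. -/
def segDelta {d N : ℕ} (τ : ZMod N → Fin d) (start : ZMod N) (m : ℕ) : ℕ :=
  (Finset.univ.filter fun c : Fin d =>
    Odd (Finset.univ.filter fun t : Fin m => τ (start + ((t : ℕ) : ZMod N)) = c).card).card

open Finset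

lemma ZMod.eq_of_natCast_eq {n a b : ℕ} (ha : a < n) (hb : b < n) (h : (a : ZMod n) = b) :
    a = b := by
  simpa [ZMod.val_natCast_of_lt ha, ZMod.val_natCast_of_lt hb] using congrArg ZMod.val h

section Hypercube

variable {d : ℕ}

lemma exists_walk_length_eq_hammingDist :
    ∀ (n : ℕ) (y z : Fin d → Bool), hammingDist y z = n →
      ∃ w : (hypercube d).Walk y z, w.length = n
  | 0, y, z, h => by
    obtain rfl := hammingDist_eq_zero.mp h
    exact ⟨.nil, rfl⟩
  | n + 1, y, z, h => by
    obtain ⟨c, hc⟩ : ∃ c, y c ≠ z c := by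
      by_contra! hyz
      simp [funext hyz] at h
    set y' := Function.update y c (z c)
    have hfilter :
        ({i | y' i ≠ z i} : Finset (Fin d)) = ({i | y i ≠ z i} : Finset _).erase c := by
      ext i
      rcases eq_or_ne i c with rfl | hi <;> simp [y', *]
    have hy' : hammingDist y' z = n := by
      rw [hammingDist, hfilter, card_erase_of_mem (by simp [hc])]
      exact Nat.sub_eq_of_eq_add h
    have hadj : (hypercube d).Adj y y' := by
      change #{i | y i ≠ y' i} = 1
      rw [card_eq_one]
      refine ⟨c, ?_⟩
      ext i
      rcases eq_or_ne i c with rfl | hi <;> simp [y', *]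
    obtain ⟨w, hw⟩ := exists_walk_length_eq_hammingDist n y' z hy'
    exact ⟨.cons hadj w, by simp [hw]⟩

lemma hypercube_dist_le_hammingDist (y z : Fin d → Bool) :
    (hypercube d).dist y z ≤ hammingDist y z := by
  obtain ⟨w, hw⟩ := exists_walk_length_eq_hammingDist _ y z rfl
  exact hw ▸ SimpleGraph.dist_le w

end Hypercube

section Segments

variable {d N : ℕ}

def segCount (τ : ZMod N → Fin d) (start : ZMod N) (m : ℕ) (c : Fin d) : ℕ :=
  #{t : Fin m | τ (start + ((t : ℕ) : ZMod N)) = c}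

lemma segDelta_eq_card_odd_segCount (τ : ZMod N → Fin d) (start : ZMod N) (m : ℕ) :
    segDelta τ start m = #{c | Odd (segCount τ start m c)} := rfl

lemma segCount_succ (τ : ZMod N → Fin d) (start : ZMod N) (m : ℕ) (c : Fin d) :
    segCount τ start (m + 1) c =
      (if τ start = c then 1 else 0) + segCount τ (start + 1) m c := by
  rw [segCount, Fin.card_filter_univ_succ']
  simp only [Fin.val_zero, Nat.cast_zero, add_zero, Fin.val_succ, Nat.cast_succ, segCount,
    add_comm (1 : ZMod N), add_assoc]

lemma sum_segCount (τ : ZMod N → Fin d) (start : ZMod N) (m : ℕ) :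
    ∑ c, segCount τ start m c = m := by
  simp only [segCount]
  rw [← card_eq_sum_card_fiberwise (fun _ _ => mem_univ _), card_univ, Fintype.card_fin]

lemma segCount_eq_card_fiber [NeZero N] (τ : ZMod N → Fin d) (start : ZMod N) (c : Fin d) :
    segCount τ start N c = #{v | τ v = c} := by
  refine card_nbij' (fun t => start + ((t : ℕ) : ZMod N))
    (fun v => ⟨(v - start).val, ZMod.val_lt _⟩)
    (fun t ht => by simpa using ht) (fun v hv => by simpa using hv) (fun t _ => ?_)
    (fun v _ => by simp)
  ext
  simp [ZMod.val_natCast_of_lt t.isLt]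

lemma two_le_segCount {τ : ZMod N → Fin d} {start : ZMod N} {m a b : ℕ} {c : Fin d}
    (ha : a < m) (hb : b < m) (hab : a ≠ b) (hτa : τ (start + a) = c)
    (hτb : τ (start + b) = c) :
    2 ≤ segCount τ start m c := by
  have hsub : ({⟨a, ha⟩, ⟨b, hb⟩} : Finset (Fin m)) ⊆
      univ.filter fun t : Fin m => τ (start + ((t : ℕ) : ZMod N)) = c := by
    intro t ht
    rcases mem_insert.mp ht with rfl | ht
    · simpa using hτa
    · rw [mem_singleton.mp ht]; simpa using hτb
  simpa [card_pair (Fin.ne_of_val_ne (i := ⟨a, ha⟩) (j := ⟨b, hb⟩) hab), segCount] using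
    card_le_card hsub

lemma card_odd_add_two_mul_card_le_sum {ι : Type*} [Fintype ι] (f : ι → ℕ) :
    #{i | Odd (f i)} + 2 * #{i | 2 ≤ f i} ≤ ∑ i, f i := by
  simp only [card_filter, mul_sum, ← sum_add_distrib]
  refine sum_le_sum fun i _ => ?_
  rcases Nat.even_or_odd (f i) with h | h
  · have := Nat.not_odd_iff_even.mpr h
    split_ifs <;> omega
  · obtain ⟨j, hj⟩ := h
    split_ifs <;> omega

lemma segDelta_add_two_mul_card_le (τ : ZMod N → Fin d) (start : ZMod N) (m : ℕ) :
    segDelta τ start m + 2 * #{c | 2 ≤ segCount τ start m c} ≤ m :=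
  (card_odd_add_two_mul_card_le_sum _).trans_eq (sum_segCount τ start m)


lemma segDelta_add_two_le [NeZero N] {τ : ZMod N → Fin d} {s : ZMod N} {m : ℕ} (hm : m + 2 = N)
    (h₀ : ∀ v, τ v = τ s → v = s) (h₁ : ∀ v, τ v = τ (s + 1) → v = s + 1) :
    segDelta τ (s + 2) m + 2 ≤ segDelta τ s N := by
  have hne : τ (s + 1) ≠ τ s := fun h => by
    have := ZMod.eq_of_natCast_eq (n := N) (a := 1) (b := 0) (by omega) (by omega)
      (by simpa using h₀ _ h)
    omega
  have hslide : ∀ c, segCount τ s (m + 2) c = (if τ s = c then 1 else 0) +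
      ((if τ (s + 1) = c then 1 else 0) + segCount τ (s + 2) m c) := by
    intro c
    rw [segCount_succ, segCount_succ, add_assoc, one_add_one_eq_two]
  have hsingle : ∀ a, (∀ v, τ v = τ a → v = a) → segCount τ s (m + 2) (τ a) = 1 := by
    intro a ha
    rw [hm, segCount_eq_card_fiber, card_eq_one]
    exact ⟨a, by ext v; simpa using ⟨ha v, fun h => h ▸ rfl⟩⟩
  have hr₀ : segCount τ (s + 2) m (τ s) = 0 := by
    have := hslide (τ s)
    rw [hsingle s h₀, if_pos rfl, if_neg hne] at this
    omega
  have hr₁ : segCount τ (s + 2) m (τ (s + 1)) = 0 := by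
    have := hslide (τ (s + 1))
    rw [hsingle (s + 1) h₁, if_neg hne.symm, if_pos rfl] at this
    omega
  have hsub : ({c | Odd (segCount τ (s + 2) m c)} : Finset (Fin d)) ⊆
      (({c | Odd (segCount τ s (m + 2) c)} : Finset _).erase (τ s)).erase (τ (s + 1)) := by
    intro c hc
    simp only [mem_filter, mem_univ, true_and, mem_erase] at hc ⊢
    have hc₁ : c ≠ τ (s + 1) := by rintro rfl; simp [hr₁] at hc
    have hc₀ : c ≠ τ s := by rintro rfl; simp [hr₀] at hc
    rw [hslide c, if_neg hc₀.symm, if_neg hc₁.symm]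
    exact ⟨hc₁, hc₀, by simpa using hc⟩
  have hmem₀ : τ s ∈ ({c | Odd (segCount τ s (m + 2) c)} : Finset (Fin d)) := by
    simp [hsingle s h₀]
  have hmem₁ : τ (s + 1) ∈ ({c | Odd (segCount τ s (m + 2) c)} : Finset _).erase (τ s) := by
    simp [hsingle (s + 1) h₁, hne]
  have := card_le_card hsub
  have := card_erase_add_one hmem₀
  have := card_erase_add_one hmem₁
  have hfull : segDelta τ s N = segDelta τ s (m + 2) := by rw [hm]
  rw [hfull, segDelta_eq_card_odd_segCount, segDelta_eq_card_odd_segCount]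
  omega

end Segments

section TransitionSeq

variable {d N : ℕ} {x : ZMod N → Fin d → Bool} {τ : ZMod N → Fin d}

lemma IsTransitionSeq.apply_add_ne_iff (hτ : IsTransitionSeq x τ) (c : Fin d) :
    ∀ (m : ℕ) (i : ZMod N), x (i + m) c ≠ x i c ↔ Odd (segCount τ i m c)
  | 0, i => by simp [segCount]
  | m + 1, i => by
    have ih := hτ.apply_add_ne_iff c m (i + 1)
    rw [segCount_succ, show i + ((m + 1 : ℕ) : ZMod N) = i + 1 + m by push_cast; ring]
    by_cases hc : τ i = c
    · have hflip : x (i + 1) c ≠ x i c := (hτ i c).mpr hc.symm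
      rw [if_pos hc, add_comm (1 : ℕ), Nat.odd_add_one, ← ih]
      revert hflip
      generalize x (i + 1 + m) c = a, x (i + 1) c = b, x i c = e
      decide +revert
    · have hstay : x (i + 1) c = x i c := not_not.mp fun h => hc ((hτ i c).mp h).symm
      rwa [if_neg hc, zero_add, ← hstay]

lemma IsTransitionSeq.hammingDist_eq_segDelta (hτ : IsTransitionSeq x τ) (i : ZMod N) (m : ℕ) :
    hammingDist (x i) (x (i + m)) = segDelta τ i m := by
  rw [segDelta_eq_card_odd_segCount, hammingDist]
  exact congrArg card (filter_congr fun c _ => ne_comm.trans (hτ.apply_add_ne_iff c m i))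

lemma cycDist_add_natCast (i : ZMod N) {m : ℕ} (hm : m < N) :
    cycDist i (i + m) = min m (N - m) := by
  have : NeZero N := ⟨by omega⟩
  rw [cycDist, sub_add_cancel_left, add_sub_cancel_left, ZMod.neg_val, ZMod.val_natCast_of_lt hm,
    min_comm]
  split_ifs with h
  · simp [Nat.eq_zero_of_dvd_of_lt ((ZMod.natCast_eq_zero_iff _ _).mp h) hm]
  · rfl

lemma IsCircuitCode.min_le_segDelta {k : ℕ} (hx : IsCircuitCode d k N x)
    (hτ : IsTransitionSeq x τ) (i : ZMod N) {m : ℕ} (hm : m < N) :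
    min (min m (N - m)) k ≤ segDelta τ i m :=
  calc min (min m (N - m)) k = min (cycDist i (i + m)) k := by rw [cycDist_add_natCast i hm]
    _ ≤ (hypercube d).dist (x i) (x (i + m)) := hx.spread _ _
    _ ≤ hammingDist (x i) (x (i + m)) := hypercube_dist_le_hammingDist _ _
    _ = segDelta τ i m := hτ.hammingDist_eq_segDelta i m

end TransitionSeq

lemma Function.Periodic.exists_comp_castHom {β : Type*} {n N : ℕ} [NeZero N] (hnN : n ∣ N)
    {τ : ZMod N → β} (hτ : Function.Periodic τ (n : ZMod N)) :
    ∃ σ : ZMod n → β, τ = σ ∘ ZMod.castHom hnN (ZMod n) := by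
  have : NeZero n := ⟨by rintro rfl; exact NeZero.ne N (zero_dvd_iff.mp hnN)⟩
  refine ⟨fun u => τ u.val, funext fun i => ?_⟩
  rw [Function.comp_apply, ZMod.castHom_apply, ZMod.cast_eq_val, ZMod.val_natCast]
  conv_lhs => rw [← ZMod.natCast_zmod_val i, ← Nat.mod_add_div i.val n]
  push_cast
  rw [mul_comm]
  exact hτ.nat_mul _ _

lemma segDelta_comp_ringHom {d n N : ℕ} (σ : ZMod n → Fin d) (φ : ZMod N →+* ZMod n)
    (i : ZMod N) (m : ℕ) : segDelta (σ ∘ φ) i m = segDelta σ (φ i) m := by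
  simp [segDelta, map_add, map_natCast]

def WindowSpread {d n : ℕ} (k : ℕ) (σ : ZMod n → Fin d) : Prop :=
  ∀ (u : ZMod n) (m : ℕ), m ≤ n → min m k ≤ segDelta σ u m

lemma IsCircuitCode.windowSpread {d k n N : ℕ} [NeZero N] {x : ZMod N → Fin d → Bool}
    {σ : ZMod n → Fin d} (hx : IsCircuitCode d k N x) (hnN : n ∣ N) (h2n : 2 * n ≤ N)
    (hτ : IsTransitionSeq x (σ ∘ ZMod.castHom hnN (ZMod n))) : WindowSpread k σ := by
  have : NeZero n := ⟨by rintro rfl; exact NeZero.ne N (zero_dvd_iff.mp hnN)⟩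
  intro u m hm
  have h := hx.min_le_segDelta hτ (u.val : ZMod N) (m := m)
    (by have := NeZero.pos N; omega)
  rwa [segDelta_comp_ringHom, map_natCast, ZMod.natCast_zmod_val,
    min_eq_left (show m ≤ N - m by omega)] at h

lemma ZMod.two_mul_add_three_eq_zero (k : ℕ) : (2 * k + 3 : ZMod (2 * k + 3)) = 0 := by
  exact_mod_cast ZMod.natCast_self (2 * k + 3)

def stepMap {k : ℕ} (A : Finset (ZMod (2 * k + 3))) (p : ZMod (2 * k + 3)) : ZMod (2 * k + 3) :=
  if p + 2 ∈ A then p + 2 else p + (k + 3)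

section Progression

variable {k : ℕ} {A : Finset (ZMod (2 * k + 3))}

lemma stepMap_mem (h₁ : ∀ p ∈ A, p + 1 ∉ A) (h₂ : ∀ p ∈ A, p + (k + 1) ∉ A)
    (hcover : ∀ s, s ∈ A ∨ s + 1 ∈ A ∨ s + (k + 2) ∈ A ∨ s + (k + 3) ∈ A)
    {p : ZMod (2 * k + 3)} (hp : p ∈ A) : stepMap A p ∈ A := by
  have hn := ZMod.two_mul_add_three_eq_zero k
  unfold stepMap
  split_ifs with h
  · exact h
  rcases hcover (p + (k + 2)) with h' | h' | h' | h'
  · have := h₂ _ h'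
    rw [show p + (k + 2) + (k + 1) = p by linear_combination hn] at this
    exact absurd hp this
  · rwa [show p + (k + 2) + 1 = p + (k + 3) by ring] at h'
  · rw [show p + (k + 2) + (k + 2) = p + 1 by linear_combination hn] at h'
    exact absurd h' (h₁ p hp)
  · rw [show p + (k + 2) + (k + 3) = p + 2 by linear_combination hn] at h'
    exact absurd h' h

lemma stepMap_injOn (h₂ : ∀ p ∈ A, p + (k + 1) ∉ A) : Set.InjOn (stepMap A) A := by
  have hn := ZMod.two_mul_add_three_eq_zero k
  intro p hp q hq hpq
  unfold stepMap at hpq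
  split_ifs at hpq with hp₂ hq₂ hq₂
  · exact add_right_cancel hpq
  · have := h₂ q hq
    rw [show q + (k + 1) = p by linear_combination -hpq] at this
    exact absurd hp this
  · have := h₂ p hp
    rw [show p + (k + 1) = q by linear_combination hpq] at this
    exact absurd hq this
  · exact add_right_cancel hpq

lemma card_filter_add_two_notMem (hcard : 2 * #A = k + 2) (h₁ : ∀ p ∈ A, p + 1 ∉ A)
    (h₂ : ∀ p ∈ A, p + (k + 1) ∉ A)
    (hcover : ∀ s, s ∈ A ∨ s + 1 ∈ A ∨ s + (k + 2) ∈ A ∨ s + (k + 3) ∈ A) :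
    #{p ∈ A | p + 2 ∉ A} = 1 := by
  have himage : A.image (stepMap A) = A :=
    eq_of_subset_of_card_le (image_subset_iff.mpr fun p hp => stepMap_mem h₁ h₂ hcover hp)
      (card_image_of_injOn (stepMap_injOn h₂)).ge
  have hsum : ∑ p ∈ A, (stepMap A p - p) =
      #{p ∈ A | p + 2 ∈ A} * 2 + #{p ∈ A | p + 2 ∉ A} * (k + 3) := by
    rw [← sum_filter_add_sum_filter_not A (fun p => p + 2 ∈ A)]
    congr 1 <;>
    · rw [sum_congr rfl fun p hp => ?_, sum_const, nsmul_eq_mul]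
      simp only [stepMap, (mem_filter.mp hp).2, if_true, if_false, add_sub_cancel_left]
  have hzero : ∑ p ∈ A, (stepMap A p - p) = 0 := by
    rw [sum_sub_distrib, sub_eq_zero]
    conv_rhs => rw [← himage]
    rw [sum_image (stepMap_injOn h₂)]
  have hsplit := card_filter_add_card_filter_not (s := A) (fun p => p + 2 ∈ A)
  -- With `b` long jumps, `2 (#A - b) + (k + 3) b ≡ 0` and `2 #A = k + 2` force `b ≡ 1`.
  have hcast :
      ((#{p ∈ A | p + 2 ∉ A} : ℕ) : ZMod (2 * k + 3)) = ((1 : ℕ) : ZMod (2 * k + 3)) := by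
    have hcard' := congrArg (Nat.cast : ℕ → ZMod (2 * k + 3)) hcard
    rw [← hsplit] at hcard'
    push_cast at hcard' ⊢
    linear_combination -2 * (hsum.symm.trans hzero) + 2 * hcard' +
      ((#{p ∈ A | p + 2 ∉ A} : ZMod (2 * k + 3)) + 1) * ZMod.two_mul_add_three_eq_zero k
  have hle := card_le_card (filter_subset (fun p => p + 2 ∉ A) A)
  exact ZMod.eq_of_natCast_eq (by omega) (by omega) hcast

lemma exists_eq_image_range (hcard : 2 * #A = k + 2) (h₁ : ∀ p ∈ A, p + 1 ∉ A)
    (h₂ : ∀ p ∈ A, p + (k + 1) ∉ A)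
    (hcover : ∀ s, s ∈ A ∨ s + 1 ∈ A ∨ s + (k + 2) ∈ A ∨ s + (k + 3) ∈ A) :
    ∃ r, A = (range #A).image fun i : ℕ => r + 2 * (i : ZMod (2 * k + 3)) := by
  obtain ⟨p, hp⟩ := card_eq_one.mp (card_filter_add_two_notMem hcard h₁ h₂ hcover)
  have hpA : p ∈ A ∧ p + 2 ∉ A := mem_filter.mp (hp ▸ mem_singleton_self p)
  have hstep : ∀ q ∈ A, q ≠ p → q + 2 ∈ A := fun q hq hne =>
    by_contra fun h => hne (mem_singleton.mp (hp ▸ mem_filter.mpr ⟨hq, h⟩))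
  have hchain : ∀ i < #A, p + (k + 3) + 2 * (i : ZMod (2 * k + 3)) ∈ A := by
    intro i
    induction i with
    | zero => exact fun _ => by simpa [stepMap, hpA.2] using stepMap_mem h₁ h₂ hcover hpA.1
    | succ i ih =>
      intro hi
      have hne : p + (k + 3) + 2 * (i : ZMod (2 * k + 3)) ≠ p := by
        intro h
        have := ZMod.eq_of_natCast_eq (n := 2 * k + 3) (a := k + 3 + 2 * i) (b := 0)
          (by omega) (by omega) (by push_cast; linear_combination h)
        omega
      convert hstep _ (ih (by omega)) hne using 1
      push_cast
      ring
  refine ⟨p + (k + 3), (eq_of_subset_of_card_le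
    (image_subset_iff.mpr fun i hi => hchain i (mem_range.mp hi)) ?_).symm⟩
  rw [card_image_of_injOn, card_range]
  intro i hi j hj hij
  simp only [coe_range, Set.mem_Iio] at hi hj
  have := ZMod.eq_of_natCast_eq (n := 2 * k + 3) (a := 2 * i) (b := 2 * j) (by omega) (by omega)
    (by push_cast; linear_combination hij)
  omega

end Progression

lemma Function.Surjective.exists_perm_comp {α β : Type*} {f g : α → β} (hf : f.Surjective)
    (hg : g.Surjective) (hfg : ∀ a b, f a = f b ↔ g a = g b) :
    ∃ π : Equiv.Perm β, ∀ a, g a = π (f a) := by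
  refine ⟨(Setoid.quotientKerEquivOfSurjective f hf).symm.trans
    ((Quotient.congrRight hfg).trans (Setoid.quotientKerEquivOfSurjective g hg)), fun a => ?_⟩
  have hsymm : (Setoid.quotientKerEquivOfSurjective f hf).symm (f a) = Quotient.mk _ a :=
    (Equiv.symm_apply_eq _).mpr rfl
  rw [Equiv.trans_apply, Equiv.trans_apply, hsymm]
  rfl

def anchors {d : ℕ} (k : ℕ) (σ : ZMod (2 * k + 3) → Fin d) : Finset (ZMod (2 * k + 3)) :=
  {u | σ (u + (k + 1)) = σ u}

section WindowSpread

variable {d k : ℕ} {σ σ' : ZMod (2 * k + 3) → Fin d}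

@[simp]
lemma mem_anchors {u : ZMod (2 * k + 3)} : u ∈ anchors k σ ↔ σ (u + (k + 1)) = σ u := by
  simp [anchors]

lemma WindowSpread.apply_add_ne (hσ : WindowSpread k σ) (u : ZMod (2 * k + 3)) {m : ℕ}
    (hm : 0 < m) (hmk : m ≤ k) : σ (u + m) ≠ σ u := by
  intro h
  have hrep : 2 ≤ segCount σ u (m + 1) (σ u) :=
    two_le_segCount (a := 0) (b := m) (by omega) (by omega) (by omega) (by simp) h
  have hpos : 0 < #{c | 2 ≤ segCount σ u (m + 1) c} :=
    card_pos.mpr ⟨σ u, by simpa using hrep⟩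
  have hle := segDelta_add_two_mul_card_le σ u (m + 1)
  have hspread := hσ u (m + 1) (by omega)
  omega

lemma WindowSpread.apply_add_one_ne (hσ : WindowSpread k σ) (hk : 1 ≤ k)
    (u : ZMod (2 * k + 3)) : σ (u + 1) ≠ σ u := by
  simpa using hσ.apply_add_ne u one_pos hk

lemma WindowSpread.apply_eq_apply_iff (hσ : WindowSpread k σ) {u v : ZMod (2 * k + 3)} :
    σ u = σ v ↔ u = v ∨ (u ∈ anchors k σ ∧ v = u + (k + 1)) ∨
      (v ∈ anchors k σ ∧ u = v + (k + 1)) := by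
  refine ⟨fun h => ?_, ?_⟩
  · have hshort : ∀ {a b : ZMod (2 * k + 3)} {m : ℕ}, m ≤ k + 1 → b = a + m →
        σ a = σ b → a = b ∨ (a ∈ anchors k σ ∧ b = a + (k + 1)) := by
      intro a b m hm hb hab
      obtain rfl | rfl : m = 0 ∨ m = k + 1 := by
        by_contra! hne
        exact hσ.apply_add_ne a (by omega) (by omega) (hb ▸ hab.symm)
      · simp [hb]
      · push_cast at hb
        exact .inr ⟨by rw [mem_anchors, ← hb, hab], hb⟩
    set m := (v - u).val
    have hm : m < 2 * k + 3 := ZMod.val_lt _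
    rcases le_or_gt m (k + 1) with hmk | hmk
    · exact (hshort hmk (by simp [m]) h).imp_right .inl
    · refine (hshort (m := 2 * k + 3 - m) (by omega) ?_ h.symm).imp Eq.symm .inr
      rw [Nat.cast_sub hm.le, ZMod.natCast_self, ZMod.natCast_zmod_val]
      ring
  · rintro (rfl | ⟨hu, rfl⟩ | ⟨hv, rfl⟩)
    · rfl
    · exact (mem_anchors.mp hu).symm
    · exact mem_anchors.mp hv

lemma WindowSpread.add_notMem_anchors (hσ : WindowSpread k σ) (hk : 1 ≤ k)
    {p : ZMod (2 * k + 3)} (hp : p ∈ anchors k σ) : p + (k + 1) ∉ anchors k σ := by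
  intro hq
  rw [mem_anchors] at hp hq
  have hwrap : p + (k + 1) + (k + 1) = p - 1 := by
    linear_combination ZMod.two_mul_add_three_eq_zero k
  apply hσ.apply_add_one_ne hk (p - 1)
  rw [sub_add_cancel, ← hwrap, hq, hp]

lemma WindowSpread.add_one_notMem_anchors (hσ : WindowSpread k σ) (hk : 1 ≤ k)
    {p : ZMod (2 * k + 3)} (hp : p ∈ anchors k σ) : p + 1 ∉ anchors k σ := by
  intro hq
  rw [mem_anchors] at hp hq
  have hrep₀ : 2 ≤ segCount σ p (k + 3) (σ p) :=
    two_le_segCount (a := 0) (b := k + 1) (by omega) (by omega) (by omega) (by simp)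
      (by push_cast; exact hp)
  have hrep₁ : 2 ≤ segCount σ p (k + 3) (σ (p + 1)) :=
    two_le_segCount (a := 1) (b := k + 2) (by omega) (by omega) (by omega) (by simp)
      (by rw [← hq]; push_cast; congr 1; ring)
  have htwo : 2 ≤ #{c | 2 ≤ segCount σ p (k + 3) c} := by
    refine (card_pair (hσ.apply_add_one_ne hk p).symm).symm.le.trans (card_le_card fun c hc => ?_)
    simp only [mem_filter, mem_univ, true_and]
    rcases mem_insert.mp hc with rfl | hc
    · exact hrep₀
    · rwa [mem_singleton.mp hc]
  have hle := segDelta_add_two_mul_card_le σ p (k + 3)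
  have hspread := hσ p (k + 3) (by omega)
  omega

lemma WindowSpread.segDelta_add_two_mul_card_anchors_le (hσ : WindowSpread k σ) (hk : 1 ≤ k)
    (u : ZMod (2 * k + 3)) : segDelta σ u (2 * k + 3) + 2 * #(anchors k σ) ≤ 2 * k + 3 := by
  have hinj : Set.InjOn σ (anchors k σ) := by
    intro p hp q hq hpq
    rcases hσ.apply_eq_apply_iff.mp hpq with h | ⟨-, rfl⟩ | ⟨-, rfl⟩
    · exact h
    · exact absurd hq (hσ.add_notMem_anchors hk hp)
    · exact absurd hp (hσ.add_notMem_anchors hk hq)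
  have hrep :
      ∀ p ∈ anchors k σ, σ p ∈ ({c | 2 ≤ segCount σ u (2 * k + 3) c} : Finset _) := by
    intro p hp
    have hne : p ≠ p + (k + 1) := by
      refine (add_ne_left.mpr fun h => ?_).symm
      have := ZMod.eq_of_natCast_eq (n := 2 * k + 3) (a := k + 1) (b := 0) (by omega) (by omega)
        (by exact_mod_cast h)
      omega
    rw [mem_filter, segCount_eq_card_fiber]
    refine ⟨mem_univ _, (card_pair hne).symm.le.trans (card_le_card fun v hv => ?_)⟩
    rcases mem_insert.mp hv with rfl | hv
    · simp
    · simpa [mem_singleton.mp hv] using mem_anchors.mp hp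
  have := card_le_card_of_injOn σ hrep hinj
  have := segDelta_add_two_mul_card_le σ u (2 * k + 3)
  omega

lemma WindowSpread.le_card_image_add_card_anchors (hσ : WindowSpread k σ) :
    2 * k + 3 ≤ #(univ.image σ) + #(anchors k σ) := by
  set B := (anchors k σ).image (· + ((k : ZMod (2 * k + 3)) + 1))
  have hinj : Set.InjOn σ ↑Bᶜ := by
    intro u hu v hv huv
    simp only [coe_compl, Set.mem_compl_iff, mem_coe, B, mem_image] at hu hv
    rcases hσ.apply_eq_apply_iff.mp huv with h | ⟨hu', rfl⟩ | ⟨hv', rfl⟩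
    · exact h
    · exact absurd ⟨u, hu', rfl⟩ hv
    · exact absurd ⟨v, hv', rfl⟩ hu
  have hB : #Bᶜ = 2 * k + 3 - #(anchors k σ) := by
    rw [card_compl, ZMod.card, card_image_of_injective _ (add_left_injective _)]
  have := card_image_of_injOn hinj
  have := card_le_card (image_subset_image (subset_univ Bᶜ) (f := σ))
  omega

lemma WindowSpread.two_mul_card_anchors (hσ : WindowSpread k σ) (hk₁ : 1 ≤ k) (hk : Even k)
    (hd : 2 * d = 3 * k + 4) : 2 * #(anchors k σ) = k + 2 := by
  obtain ⟨j, rfl⟩ := hk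
  have := hσ.le_card_image_add_card_anchors
  have := card_le_univ (univ.image σ)
  have := hσ.segDelta_add_two_mul_card_anchors_le hk₁ 0
  have := hσ 0 (2 * (j + j) + 3) le_rfl
  simp only [Fintype.card_fin] at *
  omega

lemma WindowSpread.surjective (hσ : WindowSpread k σ) (hk₁ : 1 ≤ k) (hk : Even k)
    (hd : 2 * d = 3 * k + 4) : Function.Surjective σ := by
  have := hσ.le_card_image_add_card_anchors
  have := hσ.two_mul_card_anchors hk₁ hk hd
  have himage : univ.image σ = univ :=
    eq_univ_of_card _ (le_antisymm (card_le_univ _) (by rw [Fintype.card_fin]; omega))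
  intro c
  simpa using (himage.symm ▸ mem_univ c : c ∈ univ.image σ)

lemma WindowSpread.segDelta_period_le (hσ : WindowSpread k σ) (hk₁ : 1 ≤ k) (hk : Even k)
    (hd : 2 * d = 3 * k + 4) (u : ZMod (2 * k + 3)) : segDelta σ u (2 * k + 3) ≤ k + 1 := by
  have := hσ.segDelta_add_two_mul_card_anchors_le hk₁ u
  have := hσ.two_mul_card_anchors hk₁ hk hd
  omega

lemma WindowSpread.eq_of_apply_eq (hσ : WindowSpread k σ) {s v : ZMod (2 * k + 3)}
    (hs : s ∉ anchors k σ) (hs' : s + (k + 2) ∉ anchors k σ) (h : σ v = σ s) : v = s := by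
  rcases hσ.apply_eq_apply_iff.mp h with h | ⟨hv, rfl⟩ | ⟨hs'', -⟩
  · exact h
  · refine absurd ?_ hs'
    convert hv using 1
    linear_combination ZMod.two_mul_add_three_eq_zero k
  · exact absurd hs'' hs

lemma WindowSpread.anchor_near (hσ : WindowSpread k σ) (hk₁ : 1 ≤ k) (hk : Even k)
    (hd : 2 * d = 3 * k + 4) (s : ZMod (2 * k + 3)) :
    s ∈ anchors k σ ∨ s + 1 ∈ anchors k σ ∨ s + (k + 2) ∈ anchors k σ ∨
      s + (k + 3) ∈ anchors k σ := by
  by_contra! ⟨h₀, h₁, h₂, h₃⟩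
  have hfib₀ : ∀ v, σ v = σ s → v = s := fun v => hσ.eq_of_apply_eq h₀ h₂
  have hfib₁ : ∀ v, σ v = σ (s + 1) → v = s + 1 :=
    fun v => hσ.eq_of_apply_eq h₁ (by convert h₃ using 2; ring)
  have := segDelta_add_two_le (m := 2 * k + 1) (by omega) hfib₀ hfib₁
  have := hσ (s + 2) (2 * k + 1) (by omega)
  have := hσ.segDelta_period_le hk₁ hk hd s
  omega

lemma WindowSpread.exists_anchors_eq_image_range (hσ : WindowSpread k σ) (hk₁ : 1 ≤ k)
    (hk : Even k) (hd : 2 * d = 3 * k + 4) :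
    ∃ r, anchors k σ =
      (range ((k + 2) / 2)).image fun i : ℕ => r + 2 * (i : ZMod (2 * k + 3)) := by
  have hcard := hσ.two_mul_card_anchors hk₁ hk hd
  obtain ⟨r, hr⟩ := exists_eq_image_range hcard (fun _ => hσ.add_one_notMem_anchors hk₁)
    (fun _ => hσ.add_notMem_anchors hk₁) (hσ.anchor_near hk₁ hk hd)
  exact ⟨r, by rwa [show (k + 2) / 2 = #(anchors k σ) by omega]⟩

lemma WindowSpread.exists_add_mem_anchors_iff (hσ : WindowSpread k σ) (hσ' : WindowSpread k σ')
    (hk₁ : 1 ≤ k) (hk : Even k) (hd : 2 * d = 3 * k + 4) :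
    ∃ t, ∀ u, u ∈ anchors k σ' ↔ u + t ∈ anchors k σ := by
  obtain ⟨r, hr⟩ := hσ.exists_anchors_eq_image_range hk₁ hk hd
  obtain ⟨r', hr'⟩ := hσ'.exists_anchors_eq_image_range hk₁ hk hd
  refine ⟨r - r', fun u => ?_⟩
  simp only [hr, hr', mem_image]
  refine exists_congr fun i => and_congr_right fun _ => ?_
  constructor <;> intro h <;> linear_combination h

lemma WindowSpread.apply_add_eq_apply_add_iff (hσ : WindowSpread k σ) (hσ' : WindowSpread k σ')
    {t : ZMod (2 * k + 3)} (ht : ∀ u, u ∈ anchors k σ' ↔ u + t ∈ anchors k σ)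
    (u v : ZMod (2 * k + 3)) : σ (u + t) = σ (v + t) ↔ σ' u = σ' v := by
  rw [hσ.apply_eq_apply_iff, hσ'.apply_eq_apply_iff, ← ht, ← ht, add_left_inj,
    add_right_comm u, add_left_inj, add_right_comm v, add_left_inj]

end WindowSpread

/-- Lemma 4 (uniqueness): for even `k ≥ 4` and `d = (3k+4)/2`, any two symmetric
`(d,k)` circuit codes of length `4k+6` are isomorphic: their transition sequences
agree up to a cyclic shift and a permutation of coordinates. -/
theorem stmt_5 (k d : ℕ) (hk : Even k) (hk4 : 4 ≤ k) (hd : 2 * d = 3 * k + 4)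
    (x x' : ZMod (4 * k + 6) → Fin d → Bool)
    (hx : IsCircuitCode d k (4 * k + 6) x) (hx' : IsCircuitCode d k (4 * k + 6) x')
    (τ τ' : ZMod (4 * k + 6) → Fin d)
    (hτ : IsTransitionSeq x τ) (hτ' : IsTransitionSeq x' τ')
    (hsym : ∀ i : ZMod (4 * k + 6), τ (i + ((2 * k + 3 : ℕ) : ZMod (4 * k + 6))) = τ i)
    (hsym' : ∀ i : ZMod (4 * k + 6), τ' (i + ((2 * k + 3 : ℕ) : ZMod (4 * k + 6))) = τ' i) :
    ∃ (s : ZMod (4 * k + 6)) (π : Equiv.Perm (Fin d)),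
      ∀ i : ZMod (4 * k + 6), τ' i = π (τ (i + s)) := by
  have : NeZero (4 * k + 6) := ⟨by omega⟩
  have hdvd : 2 * k + 3 ∣ 4 * k + 6 := ⟨2, by ring⟩
  obtain ⟨σ, rfl⟩ := Function.Periodic.exists_comp_castHom hdvd hsym
  obtain ⟨σ', rfl⟩ := Function.Periodic.exists_comp_castHom hdvd hsym'
  have hσ := hx.windowSpread hdvd (by omega) hτ
  have hσ' := hx'.windowSpread hdvd (by omega) hτ'
  obtain ⟨t, ht⟩ := hσ.exists_add_mem_anchors_iff hσ' (by omega) hk hd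
  obtain ⟨π, hπ⟩ := Function.Surjective.exists_perm_comp (f := fun u => σ (u + t))
    ((hσ.surjective (by omega) hk hd).comp (add_right_surjective t))
    (hσ'.surjective (by omega) hk hd) (hσ.apply_add_eq_apply_add_iff hσ' ht)
  refine ⟨(t.val : ZMod (4 * k + 6)), π, fun i => ?_⟩
  rw [Function.comp_apply, Function.comp_apply, hπ, map_add, map_natCast, ZMod.natCast_zmod_val]
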